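/- arXiv:2406.09083 — 3 statements merged into one kernel-verified Lean document; each statement's English description precedes it below -/
import Mathlib

section
/- Let a, b, c, d be nonnegative integers with c + d = a + b + 1. The Octopus position [1^a, 2^b | 1^c, 2^d] with finger count 2 is: a P-position if a = b = 0; an N-position if b = 0, d > 0 and c is odd; and an R-position otherwise. -/
namespace Octopus

/-- An Octopus position: the multiset of Left's hand values and the
multiset of Right's hand values. -/
abbrev Pos : Type := Multiset ℕ × Multiset ℕ

/-- All hand values lie in `{1, ..., n}`, where `n` is the finger count. -/
def Valid (n : ℕ) (P : Pos) : Prop :=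
  (∀ x ∈ P.1, 1 ≤ x ∧ x ≤ n) ∧ (∀ y ∈ P.2, 1 ≤ y ∧ y ≤ n)

/-- A move of Left with finger count `n`: Left chooses an attacking hand `x` in
her multiset and a target hand `y` in Right's multiset; that copy of `y` is
replaced by `x + y`, or removed from play if `x + y > n`. -/
def LeftMove (n : ℕ) (P Q : Pos) : Prop :=
  ∃ x ∈ P.1, ∃ y ∈ P.2,
    Q.1 = P.1 ∧
    Q.2 = if x + y ≤ n then (x + y) ::ₘ P.2.erase y else P.2.erase y

/-- A move of Right with finger count `n`: Right chooses an attacking hand `y` in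
his multiset and a target hand `x` in Left's multiset; that copy of `x` is
replaced by `x + y`, or removed from play if `x + y > n`. -/
def RightMove (n : ℕ) (P Q : Pos) : Prop :=
  ∃ x ∈ P.1, ∃ y ∈ P.2,
    Q.2 = P.2 ∧
    Q.1 = if x + y ≤ n then (x + y) ::ₘ P.1.erase x else P.1.erase x

/-- `LeftWinsFirst n P`: Left, moving first from `P`, has a winning strategy
(normal play: a player with no move on their turn loses). -/
inductive LeftWinsFirst (n : ℕ) : Pos → Prop
  | intro (P Q : Pos) (hmove : LeftMove n P Q)
      (hwin : ∀ R, RightMove n Q R → LeftWinsFirst n R) : LeftWinsFirst n P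

/-- `RightWinsFirst n P`: Right, moving first from `P`, has a winning strategy. -/
inductive RightWinsFirst (n : ℕ) : Pos → Prop
  | intro (P Q : Pos) (hmove : RightMove n P Q)
      (hwin : ∀ R, LeftMove n Q R → RightWinsFirst n R) : RightWinsFirst n P

/-- Left, moving second from `P`, has a winning strategy. -/
def LeftWinsSecond (n : ℕ) (P : Pos) : Prop :=
  ∀ Q, RightMove n P Q → LeftWinsFirst n Q

/-- Right, moving second from `P`, has a winning strategy. -/
def RightWinsSecond (n : ℕ) (P : Pos) : Prop :=
  ∀ Q, LeftMove n P Q → RightWinsFirst n Q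

/-- `N`-position: whichever player moves first wins. -/
def NPos (n : ℕ) (P : Pos) : Prop := LeftWinsFirst n P ∧ RightWinsFirst n P

/-- `P`-position: whichever player moves second wins. -/
def PPos (n : ℕ) (P : Pos) : Prop := LeftWinsSecond n P ∧ RightWinsSecond n P

/-- `L`-position: Left wins whoever moves first. -/
def LPos (n : ℕ) (P : Pos) : Prop := LeftWinsFirst n P ∧ LeftWinsSecond n P

/-- `R`-position: Right wins whoever moves first. -/
def RPos (n : ℕ) (P : Pos) : Prop := RightWinsFirst n P ∧ RightWinsSecond n P

/-- The position `[1^a, 2^b | 1^c, 2^d]` (used with finger count 2). -/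
def two (a b c d : ℕ) : Pos :=
  (Multiset.replicate a 1 + Multiset.replicate b 2,
   Multiset.replicate c 1 + Multiset.replicate d 2)


/-- The multiset `{1^a, 2^b}`. -/
def H (a b : ℕ) : Multiset ℕ := Multiset.replicate a 1 + Multiset.replicate b 2

lemma two_eq (a b c d : ℕ) : two a b c d = (H a b, H c d) := rfl

lemma mem_H {x a b : ℕ} : x ∈ H a b ↔ (x = 1 ∧ 0 < a) ∨ (x = 2 ∧ 0 < b) := by
  simp only [H, Multiset.mem_add, Multiset.mem_replicate]
  omega

lemma H_erase_one {a b : ℕ} (h : 0 < a) : (H a b).erase 1 = H (a - 1) b := by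
  obtain ⟨a', rfl⟩ : ∃ a', a = a' + 1 := ⟨a - 1, by omega⟩
  simp only [H, Multiset.replicate_succ, Multiset.cons_add, Multiset.erase_cons_head,
    Nat.add_sub_cancel]

lemma H_erase_two {a b : ℕ} (h : 0 < b) : (H a b).erase 2 = H a (b - 1) := by
  obtain ⟨b', rfl⟩ : ∃ b', b = b' + 1 := ⟨b - 1, by omega⟩
  rw [H, Multiset.replicate_succ, add_comm, Multiset.cons_add, Multiset.erase_cons_head,
    add_comm]
  simp [H]

lemma H_cons_two {a b : ℕ} : (2 : ℕ) ::ₘ H a b = H a (b + 1) := by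
  simp only [H, Multiset.replicate_succ, ← Multiset.singleton_add]
  abel

lemma leftMove_iff {a b c d : ℕ} {Q : Pos} :
    LeftMove 2 (two a b c d) Q ↔
      (0 < a ∧ 0 < c ∧ Q = two a b (c - 1) (d + 1)) ∨
      (0 < b ∧ 0 < c ∧ Q = two a b (c - 1) d) ∨
      (0 < a + b ∧ 0 < d ∧ Q = two a b c (d - 1)) := by
  rw [two_eq]
  constructor
  · rintro ⟨x, hx, y, hy, h1, h2⟩
    simp only at h1 h2
    rcases mem_H.mp hx with ⟨rfl, ha⟩ | ⟨rfl, hb⟩ <;>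
      rcases mem_H.mp hy with ⟨rfl, hc⟩ | ⟨rfl, hd⟩
    · refine Or.inl ⟨ha, hc, ?_⟩
      rw [if_pos (by norm_num)] at h2
      rw [two_eq, Prod.ext_iff]
      exact ⟨h1, by rw [h2, H_erase_one hc, H_cons_two]⟩
    · refine Or.inr (Or.inr ⟨by omega, hd, ?_⟩)
      rw [if_neg (by norm_num)] at h2
      rw [two_eq, Prod.ext_iff]
      exact ⟨h1, by rw [h2, H_erase_two hd]⟩
    · refine Or.inr (Or.inl ⟨hb, hc, ?_⟩)
      rw [if_neg (by norm_num)] at h2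
      rw [two_eq, Prod.ext_iff]
      exact ⟨h1, by rw [h2, H_erase_one hc]⟩
    · refine Or.inr (Or.inr ⟨by omega, hd, ?_⟩)
      rw [if_neg (by norm_num)] at h2
      rw [two_eq, Prod.ext_iff]
      exact ⟨h1, by rw [h2, H_erase_two hd]⟩
  · rintro (⟨ha, hc, rfl⟩ | ⟨hb, hc, rfl⟩ | ⟨hab, hd, rfl⟩)
    · exact ⟨1, mem_H.mpr (Or.inl ⟨rfl, ha⟩), 1, mem_H.mpr (Or.inl ⟨rfl, hc⟩), rfl,
        by rw [two_eq]; simp only [if_pos (by norm_num : (1:ℕ) + 1 ≤ 2)]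
           rw [H_erase_one hc, H_cons_two]⟩
    · exact ⟨2, mem_H.mpr (Or.inr ⟨rfl, hb⟩), 1, mem_H.mpr (Or.inl ⟨rfl, hc⟩), rfl,
        by rw [two_eq]; simp only [if_neg (by norm_num : ¬ ((2:ℕ) + 1 ≤ 2))]
           rw [H_erase_one hc]⟩
    · rcases (by omega : 0 < a ∨ 0 < b) with ha | hb
      · exact ⟨1, mem_H.mpr (Or.inl ⟨rfl, ha⟩), 2, mem_H.mpr (Or.inr ⟨rfl, hd⟩), rfl,
          by rw [two_eq]; simp only [if_neg (by norm_num : ¬ ((1:ℕ) + 2 ≤ 2))]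
             rw [H_erase_two hd]⟩
      · exact ⟨2, mem_H.mpr (Or.inr ⟨rfl, hb⟩), 2, mem_H.mpr (Or.inr ⟨rfl, hd⟩), rfl,
          by rw [two_eq]; simp only [if_neg (by norm_num : ¬ ((2:ℕ) + 2 ≤ 2))]
             rw [H_erase_two hd]⟩

lemma rightMove_iff {a b c d : ℕ} {Q : Pos} :
    RightMove 2 (two a b c d) Q ↔
      (0 < a ∧ 0 < c ∧ Q = two (a - 1) (b + 1) c d) ∨
      (0 < a ∧ 0 < d ∧ Q = two (a - 1) b c d) ∨
      (0 < b ∧ 0 < c + d ∧ Q = two a (b - 1) c d) := by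
  rw [two_eq]
  constructor
  · rintro ⟨x, hx, y, hy, h2, h1⟩
    simp only at h1 h2
    rcases mem_H.mp hx with ⟨rfl, ha⟩ | ⟨rfl, hb⟩ <;>
      rcases mem_H.mp hy with ⟨rfl, hc⟩ | ⟨rfl, hd⟩
    · refine Or.inl ⟨ha, hc, ?_⟩
      rw [if_pos (by norm_num)] at h1
      rw [two_eq, Prod.ext_iff]
      exact ⟨by rw [h1, H_erase_one ha, H_cons_two], h2⟩
    · refine Or.inr (Or.inl ⟨ha, hd, ?_⟩)
      rw [if_neg (by norm_num)] at h1
      rw [two_eq, Prod.ext_iff]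
      exact ⟨by rw [h1, H_erase_one ha], h2⟩
    · refine Or.inr (Or.inr ⟨hb, by omega, ?_⟩)
      rw [if_neg (by norm_num)] at h1
      rw [two_eq, Prod.ext_iff]
      exact ⟨by rw [h1, H_erase_two hb], h2⟩
    · refine Or.inr (Or.inr ⟨hb, by omega, ?_⟩)
      rw [if_neg (by norm_num)] at h1
      rw [two_eq, Prod.ext_iff]
      exact ⟨by rw [h1, H_erase_two hb], h2⟩
  · rintro (⟨ha, hc, rfl⟩ | ⟨ha, hd, rfl⟩ | ⟨hb, hcd, rfl⟩)
    · exact ⟨1, mem_H.mpr (Or.inl ⟨rfl, ha⟩), 1, mem_H.mpr (Or.inl ⟨rfl, hc⟩), rfl,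
        by rw [two_eq]; simp only [if_pos (by norm_num : (1:ℕ) + 1 ≤ 2)]
           rw [H_erase_one ha, H_cons_two]⟩
    · exact ⟨1, mem_H.mpr (Or.inl ⟨rfl, ha⟩), 2, mem_H.mpr (Or.inr ⟨rfl, hd⟩), rfl,
        by rw [two_eq]; simp only [if_neg (by norm_num : ¬ ((1:ℕ) + 2 ≤ 2))]
           rw [H_erase_one ha]⟩
    · rcases (by omega : 0 < c ∨ 0 < d) with hc | hd
      · exact ⟨2, mem_H.mpr (Or.inr ⟨rfl, hb⟩), 1, mem_H.mpr (Or.inl ⟨rfl, hc⟩), rfl,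
          by rw [two_eq]; simp only [if_neg (by norm_num : ¬ ((2:ℕ) + 1 ≤ 2))]
             rw [H_erase_two hb]⟩
      · exact ⟨2, mem_H.mpr (Or.inr ⟨rfl, hb⟩), 2, mem_H.mpr (Or.inr ⟨rfl, hd⟩), rfl,
          by rw [two_eq]; simp only [if_neg (by norm_num : ¬ ((2:ℕ) + 2 ≤ 2))]
             rw [H_erase_two hb]⟩

/-- Closed-form condition for "Left wins moving first" in `[1^a,2^b | 1^c,2^d]` (n = 2). -/
def Lc (a b c d : ℕ) : Prop :=
  (a = 0 ∧ 0 < c + d ∧ c + d ≤ b) ∨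
  (0 < a ∧ b = 0 ∧ 0 < c + d ∧ d + 2 * (c / 2) ≤ a ∧ (0 < d ∨ c % 2 = 0 ∨ c < a)) ∨
  (0 < a ∧ 0 < b ∧ 0 < c + d ∧ c + d ≤ a + b ∧ ¬ (d = 0 ∧ c = a + b ∧ a % 2 = 1))

/-- Closed-form condition for "Right wins moving first". -/
def Rc (a b c d : ℕ) : Prop := Lc c d a b

lemma lemA {a b c d : ℕ} (h : Lc a b c d) :
    (0 < a ∧ 0 < c ∧ ¬ Rc a b (c - 1) (d + 1)) ∨
    (0 < b ∧ 0 < c ∧ ¬ Rc a b (c - 1) d) ∨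
    (0 < a + b ∧ 0 < d ∧ ¬ Rc a b c (d - 1)) := by
  unfold Lc at h; unfold Rc Lc; omega

lemma lemB {a b c d : ℕ} (h : ¬ Lc a b c d) :
    ((0 < a ∧ 0 < c) → Rc a b (c - 1) (d + 1)) ∧
    ((0 < b ∧ 0 < c) → Rc a b (c - 1) d) ∧
    ((0 < a + b ∧ 0 < d) → Rc a b c (d - 1)) := by
  unfold Lc at h; unfold Rc Lc; omega

lemma lemC {a b c d : ℕ} (h : Rc a b c d) :
    (0 < a ∧ 0 < c ∧ ¬ Lc (a - 1) (b + 1) c d) ∨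
    (0 < a ∧ 0 < d ∧ ¬ Lc (a - 1) b c d) ∨
    (0 < b ∧ 0 < c + d ∧ ¬ Lc a (b - 1) c d) := by
  unfold Rc Lc at h; unfold Lc; omega

lemma lemD {a b c d : ℕ} (h : ¬ Rc a b c d) :
    ((0 < a ∧ 0 < c) → Lc (a - 1) (b + 1) c d) ∧
    ((0 < a ∧ 0 < d) → Lc (a - 1) b c d) ∧
    ((0 < b ∧ 0 < c + d) → Lc a (b - 1) c d) := by
  unfold Rc Lc at h; unfold Lc; omega

lemma main : ∀ (m a b c d : ℕ), 2 * a + b + 2 * c + d ≤ m →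
    (Lc a b c d → LeftWinsFirst 2 (two a b c d)) ∧
    (¬ Lc a b c d → RightWinsSecond 2 (two a b c d)) ∧
    (Rc a b c d → RightWinsFirst 2 (two a b c d)) ∧
    (¬ Rc a b c d → LeftWinsSecond 2 (two a b c d)) := by
  intro m
  induction m using Nat.strong_induction_on with
  | _ m ih =>
    intro a b c d hm
    refine ⟨?_, ?_, ?_, ?_⟩
    · intro hL
      rcases lemA hL with ⟨ha, hc, hn⟩ | ⟨hb, hc, hn⟩ | ⟨hab, hd, hn⟩
      · exact .intro _ _ (leftMove_iff.mpr (Or.inl ⟨ha, hc, rfl⟩))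
          ((ih (2 * a + b + 2 * (c - 1) + (d + 1)) (by omega) a b (c - 1) (d + 1)
            le_rfl).2.2.2 hn)
      · exact .intro _ _ (leftMove_iff.mpr (Or.inr (Or.inl ⟨hb, hc, rfl⟩)))
          ((ih (2 * a + b + 2 * (c - 1) + d) (by omega) a b (c - 1) d le_rfl).2.2.2 hn)
      · exact .intro _ _ (leftMove_iff.mpr (Or.inr (Or.inr ⟨hab, hd, rfl⟩)))
          ((ih (2 * a + b + 2 * c + (d - 1)) (by omega) a b c (d - 1) le_rfl).2.2.2 hn)
    · intro hL Q hQ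
      rcases leftMove_iff.mp hQ with ⟨ha, hc, rfl⟩ | ⟨hb, hc, rfl⟩ | ⟨hab, hd, rfl⟩
      · exact (ih (2 * a + b + 2 * (c - 1) + (d + 1)) (by omega) a b (c - 1) (d + 1)
          le_rfl).2.2.1 ((lemB hL).1 ⟨ha, hc⟩)
      · exact (ih (2 * a + b + 2 * (c - 1) + d) (by omega) a b (c - 1) d
          le_rfl).2.2.1 ((lemB hL).2.1 ⟨hb, hc⟩)
      · exact (ih (2 * a + b + 2 * c + (d - 1)) (by omega) a b c (d - 1)
          le_rfl).2.2.1 ((lemB hL).2.2 ⟨hab, hd⟩)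
    · intro hR
      rcases lemC hR with ⟨ha, hc, hn⟩ | ⟨ha, hd, hn⟩ | ⟨hb, hcd, hn⟩
      · exact .intro _ _ (rightMove_iff.mpr (Or.inl ⟨ha, hc, rfl⟩))
          ((ih (2 * (a - 1) + (b + 1) + 2 * c + d) (by omega) (a - 1) (b + 1) c d
            le_rfl).2.1 hn)
      · exact .intro _ _ (rightMove_iff.mpr (Or.inr (Or.inl ⟨ha, hd, rfl⟩)))
          ((ih (2 * (a - 1) + b + 2 * c + d) (by omega) (a - 1) b c d le_rfl).2.1 hn)
      · exact .intro _ _ (rightMove_iff.mpr (Or.inr (Or.inr ⟨hb, hcd, rfl⟩)))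
          ((ih (2 * a + (b - 1) + 2 * c + d) (by omega) a (b - 1) c d le_rfl).2.1 hn)
    · intro hR Q hQ
      rcases rightMove_iff.mp hQ with ⟨ha, hc, rfl⟩ | ⟨ha, hd, rfl⟩ | ⟨hb, hcd, rfl⟩
      · exact (ih (2 * (a - 1) + (b + 1) + 2 * c + d) (by omega) (a - 1) (b + 1) c d
          le_rfl).1 ((lemD hR).1 ⟨ha, hc⟩)
      · exact (ih (2 * (a - 1) + b + 2 * c + d) (by omega) (a - 1) b c d
          le_rfl).1 ((lemD hR).2.1 ⟨ha, hd⟩)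
      · exact (ih (2 * a + (b - 1) + 2 * c + d) (by omega) a (b - 1) c d
          le_rfl).1 ((lemD hR).2.2 ⟨hb, hcd⟩)

/-- outcomes of `[1^a, 2^b | 1^c, 2^d]` with finger count 2 when
Right has exactly one more hand than Left. -/
theorem fingerTwo_oneMoreHand_right (a b c d : ℕ) (h : c + d = a + b + 1) :
    ((a = 0 ∧ b = 0) → PPos 2 (two a b c d)) ∧
    ((b = 0 ∧ 0 < d ∧ Odd c) → NPos 2 (two a b c d)) ∧
    ((¬ (a = 0 ∧ b = 0) ∧ ¬ (b = 0 ∧ 0 < d ∧ Odd c)) →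
      RPos 2 (two a b c d)) := by
  have M := main (2 * a + b + 2 * c + d) a b c d le_rfl
  refine ⟨?_, ?_, ?_⟩
  · rintro ⟨rfl, rfl⟩
    exact ⟨M.2.2.2 (by unfold Rc Lc; omega), M.2.1 (by unfold Lc; omega)⟩
  · rintro ⟨rfl, hd, hc⟩
    rw [Nat.odd_iff] at hc
    exact ⟨M.1 (by unfold Lc; omega), M.2.2.1 (by unfold Rc Lc; omega)⟩
  · rintro ⟨h1, h2⟩
    simp only [Nat.odd_iff] at h2
    exact ⟨M.2.2.1 (by unfold Rc Lc; omega), M.2.1 (by unfold Lc; omega)⟩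


end Octopus
end

section
/- Let a be a positive integer. The Octopus position [1^a | 1^a] with finger count 3 (each player has a hands, all showing 1 finger) is an N-position: whichever player moves first has a winning strategy. -/
namespace Octopus

-- multiset of p ones, q twos, r threes
def M (p q r : ℕ) : Multiset ℕ :=
  Multiset.replicate p 1 + Multiset.replicate q 2 + Multiset.replicate r 3

def pos (p q r c d e : ℕ) : Pos := (M p q r, M c d e)

lemma mem_M {x p q r : ℕ} (h : x ∈ M p q r) :
    (x = 1 ∧ 0 < p) ∨ (x = 2 ∧ 0 < q) ∨ (x = 3 ∧ 0 < r) := by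
  simp only [M, Multiset.mem_add, Multiset.mem_replicate] at h
  rcases h with (⟨h1, h2⟩ | ⟨h1, h2⟩) | ⟨h1, h2⟩ <;> omega

lemma mem_M1 {p q r : ℕ} (h : 0 < p) : (1 : ℕ) ∈ M p q r := by
  simp only [M, Multiset.mem_add, Multiset.mem_replicate]
  exact Or.inl (Or.inl ⟨h.ne', trivial⟩)

lemma mem_M2 {p q r : ℕ} (h : 0 < q) : (2 : ℕ) ∈ M p q r := by
  simp only [M, Multiset.mem_add, Multiset.mem_replicate]
  exact Or.inl (Or.inr ⟨h.ne', trivial⟩)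

lemma mem_M3 {p q r : ℕ} (h : 0 < r) : (3 : ℕ) ∈ M p q r := by
  simp only [M, Multiset.mem_add, Multiset.mem_replicate]
  exact Or.inr ⟨h.ne', trivial⟩

lemma cons1 (p q r : ℕ) : (1 : ℕ) ::ₘ M p q r = M (p + 1) q r := by
  simp [M, Multiset.replicate_succ, Multiset.cons_add]

lemma cons2 (p q r : ℕ) : (2 : ℕ) ::ₘ M p q r = M p (q + 1) r := by
  simp only [M, Multiset.replicate_succ]
  rw [Multiset.add_cons, Multiset.cons_add]

lemma cons3 (p q r : ℕ) : (3 : ℕ) ::ₘ M p q r = M p q (r + 1) := by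
  simp only [M, Multiset.replicate_succ]
  rw [Multiset.add_cons]

lemma er1 {p : ℕ} (q r : ℕ) (h : 0 < p) : (M p q r).erase 1 = M (p - 1) q r := by
  obtain ⟨k, rfl⟩ : ∃ k, p = k + 1 := ⟨p - 1, by omega⟩
  rw [← cons1, Multiset.erase_cons_head]; simp

lemma er2 {q : ℕ} (p r : ℕ) (h : 0 < q) : (M p q r).erase 2 = M p (q - 1) r := by
  obtain ⟨k, rfl⟩ : ∃ k, q = k + 1 := ⟨q - 1, by omega⟩
  rw [← cons2, Multiset.erase_cons_head]; simp

lemma er3 {r : ℕ} (p q : ℕ) (h : 0 < r) : (M p q r).erase 3 = M p q (r - 1) := by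
  obtain ⟨k, rfl⟩ : ∃ k, r = k + 1 := ⟨r - 1, by omega⟩
  rw [← cons3, Multiset.erase_cons_head]; simp

-- Left reply constructors
lemma mvL {p q r c d e c' d' e' x y : ℕ} (hx : x ∈ M p q r) (hy : y ∈ M c d e)
    (hupd : (if x + y ≤ 3 then (x + y) ::ₘ (M c d e).erase y else (M c d e).erase y)
      = M c' d' e') :
    LeftMove 3 (pos p q r c d e) (pos p q r c' d' e') :=
  ⟨x, hx, y, hy, rfl, hupd.symm⟩

lemma mv11 {p q r c d e : ℕ} (hp : 0 < p) (hc : 0 < c) :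
    LeftMove 3 (pos p q r c d e) (pos p q r (c - 1) (d + 1) e) := by
  refine mvL (mem_M1 hp) (mem_M1 hc) ?_
  rw [if_pos (by norm_num), er1 _ _ hc, cons2]

lemma mv12 {p q r c d e : ℕ} (hp : 0 < p) (hd : 0 < d) :
    LeftMove 3 (pos p q r c d e) (pos p q r c (d - 1) (e + 1)) := by
  refine mvL (mem_M1 hp) (mem_M2 hd) ?_
  rw [if_pos (by norm_num), er2 _ _ hd, cons3]

lemma mv13 {p q r c d e : ℕ} (hp : 0 < p) (he : 0 < e) :
    LeftMove 3 (pos p q r c d e) (pos p q r c d (e - 1)) := by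
  refine mvL (mem_M1 hp) (mem_M3 he) ?_
  rw [if_neg (by norm_num), er3 _ _ he]

lemma mv21 {p q r c d e : ℕ} (hq : 0 < q) (hc : 0 < c) :
    LeftMove 3 (pos p q r c d e) (pos p q r (c - 1) d (e + 1)) := by
  refine mvL (mem_M2 hq) (mem_M1 hc) ?_
  rw [if_pos (by norm_num), er1 _ _ hc, cons3]

lemma mv22 {p q r c d e : ℕ} (hq : 0 < q) (hd : 0 < d) :
    LeftMove 3 (pos p q r c d e) (pos p q r c (d - 1) e) := by
  refine mvL (mem_M2 hq) (mem_M2 hd) ?_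
  rw [if_neg (by norm_num), er2 _ _ hd]

lemma mv23 {p q r c d e : ℕ} (hq : 0 < q) (he : 0 < e) :
    LeftMove 3 (pos p q r c d e) (pos p q r c d (e - 1)) := by
  refine mvL (mem_M2 hq) (mem_M3 he) ?_
  rw [if_neg (by norm_num), er3 _ _ he]

lemma mv31 {p q r c d e : ℕ} (hr : 0 < r) (hc : 0 < c) :
    LeftMove 3 (pos p q r c d e) (pos p q r (c - 1) d e) := by
  refine mvL (mem_M3 hr) (mem_M1 hc) ?_
  rw [if_neg (by norm_num), er1 _ _ hc]

lemma mv32 {p q r c d e : ℕ} (hr : 0 < r) (hd : 0 < d) :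
    LeftMove 3 (pos p q r c d e) (pos p q r c (d - 1) e) := by
  refine mvL (mem_M3 hr) (mem_M2 hd) ?_
  rw [if_neg (by norm_num), er2 _ _ hd]

lemma mv33 {p q r c d e : ℕ} (hr : 0 < r) (he : 0 < e) :
    LeftMove 3 (pos p q r c d e) (pos p q r c d (e - 1)) := by
  refine mvL (mem_M3 hr) (mem_M3 he) ?_
  rw [if_neg (by norm_num), er3 _ _ he]

/-- Decomposition of a Right move from a counted position. -/
lemma rightMove_pos {p q r c d e : ℕ} {Q : Pos}
    (h : RightMove 3 (pos p q r c d e) Q) :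
    (0 < c ∨ 0 < d ∨ 0 < e) ∧
    ((0 < p ∧ 0 < c ∧ Q = pos (p - 1) (q + 1) r c d e) ∨
     (0 < p ∧ 0 < d ∧ Q = pos (p - 1) q (r + 1) c d e) ∨
     (0 < p ∧ 0 < e ∧ Q = pos (p - 1) q r c d e) ∨
     (0 < q ∧ 0 < c ∧ Q = pos p (q - 1) (r + 1) c d e) ∨
     (0 < q ∧ 0 < d ∧ Q = pos p (q - 1) r c d e) ∨
     (0 < q ∧ 0 < e ∧ Q = pos p (q - 1) r c d e) ∨
     (0 < r ∧ Q = pos p q (r - 1) c d e)) := by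
  obtain ⟨x, hx, y, hy, hQ2, hQ1⟩ := h
  obtain ⟨Q1, Q2⟩ := Q
  simp only [pos] at hQ1 hQ2
  rcases mem_M hx with ⟨rfl, hp⟩ | ⟨rfl, hq⟩ | ⟨rfl, hr⟩ <;>
    rcases mem_M hy with ⟨rfl, hc⟩ | ⟨rfl, hd⟩ | ⟨rfl, he⟩
  · refine ⟨Or.inl hc, Or.inl ⟨hp, hc, ?_⟩⟩
    rw [if_pos (by norm_num), er1 _ _ hp, cons2] at hQ1
    simp [pos, hQ1, hQ2]
  · refine ⟨Or.inr (Or.inl hd), Or.inr (Or.inl ⟨hp, hd, ?_⟩)⟩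
    rw [if_pos (by norm_num), er1 _ _ hp, cons3] at hQ1
    simp [pos, hQ1, hQ2]
  · refine ⟨Or.inr (Or.inr he), Or.inr (Or.inr (Or.inl ⟨hp, he, ?_⟩))⟩
    rw [if_neg (by norm_num), er1 _ _ hp] at hQ1
    simp [pos, hQ1, hQ2]
  · refine ⟨Or.inl hc, Or.inr (Or.inr (Or.inr (Or.inl ⟨hq, hc, ?_⟩)))⟩
    rw [if_pos (by norm_num), er2 _ _ hq, cons3] at hQ1
    simp [pos, hQ1, hQ2]
  · refine ⟨Or.inr (Or.inl hd), Or.inr (Or.inr (Or.inr (Or.inr (Or.inl ⟨hq, hd, ?_⟩))))⟩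
    rw [if_neg (by norm_num), er2 _ _ hq] at hQ1
    simp [pos, hQ1, hQ2]
  · refine ⟨Or.inr (Or.inr he), Or.inr (Or.inr (Or.inr (Or.inr (Or.inr (Or.inl ⟨hq, he, ?_⟩)))))⟩
    rw [if_neg (by norm_num), er2 _ _ hq] at hQ1
    simp [pos, hQ1, hQ2]
  · refine ⟨Or.inl hc, Or.inr (Or.inr (Or.inr (Or.inr (Or.inr (Or.inr ⟨hr, ?_⟩)))))⟩
    rw [if_neg (by norm_num), er3 _ _ hr] at hQ1
    simp [pos, hQ1, hQ2]
  · refine ⟨Or.inr (Or.inl hd), Or.inr (Or.inr (Or.inr (Or.inr (Or.inr (Or.inr ⟨hr, ?_⟩)))))⟩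
    rw [if_neg (by norm_num), er3 _ _ hr] at hQ1
    simp [pos, hQ1, hQ2]
  · refine ⟨Or.inr (Or.inr he), Or.inr (Or.inr (Or.inr (Or.inr (Or.inr (Or.inr ⟨hr, ?_⟩)))))⟩
    rw [if_neg (by norm_num), er3 _ _ hr] at hQ1
    simp [pos, hQ1, hQ2]

/-- The invariant: positions `[1^p 2^q 3^r | 1^c 2^d 3^e]` with Right to move
from which Left (moving second) wins. -/
def Inv (p q r c d e : ℕ) : Prop :=
  (p = 0 ∧ q = 0 ∧ r = 0) ∨
  (d = 0 ∧ e = 0 ∧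
    ((q = 0 ∧ r = 0 ∧ c + 1 ≤ p) ∨
     (q = 0 ∧ 1 ≤ r ∧ c + 1 ≤ p + r) ∨
     (1 ≤ q ∧ r = 0 ∧ c + 1 ≤ p + q) ∨
     (1 ≤ q ∧ 1 ≤ r ∧ c + 2 ≤ p + q + r) ∨
     (p = 0 ∧ q = 1 ∧ r = 0 ∧ c ≤ 1))) ∨
  (d = 1 ∧ e = 0 ∧ q = 0 ∧ r = 0 ∧ c + 1 ≤ p) ∨
  (d = 0 ∧ e = 1 ∧ r = 0 ∧ c + 2 ≤ p + q)

def meas (p q r c d e : ℕ) : ℕ := 3 * p + 2 * q + r + 3 * c + 2 * d + e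

/-- What Left needs after Right's move: each branch of her reply rule
lands back in `Inv`. -/
def Ready (p' q' r' c d e : ℕ) : Prop :=
  (0 < r' → 0 < e → Inv p' q' r' c d (e - 1)) ∧
  (0 < r' → e = 0 → 0 < d → Inv p' q' r' c (d - 1) e) ∧
  (0 < r' → e = 0 → d = 0 → 0 < c ∧ Inv p' q' r' (c - 1) d e) ∧
  (r' = 0 → 0 < q' → 0 < e → Inv p' q' r' c d (e - 1)) ∧
  (r' = 0 → 0 < q' → 0 < e → True) ∧
  (r' = 0 → 0 < q' → e = 0 → 0 < d → Inv p' q' r' c (d - 1) e) ∧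
  (r' = 0 → 0 < q' → e = 0 → d = 0 → 0 < c ∧ Inv p' q' r' (c - 1) d (e + 1)) ∧
  (r' = 0 → q' = 0 → 0 < e → 0 < p' ∧ Inv p' q' r' c d (e - 1)) ∧
  (r' = 0 → q' = 0 → e = 0 → 0 < c → 0 < p' ∧ Inv p' q' r' (c - 1) (d + 1) e) ∧
  (r' = 0 → q' = 0 → e = 0 → c = 0 → 0 < p' ∧ 0 < d ∧ Inv p' q' r' c (d - 1) (e + 1))

set_option maxHeartbeats 1000000 in
/-- Main lemma: from an `Inv` position with Right to move, Left wins. -/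
lemma main_s8 : ∀ N p q r c d e, 3*p+2*q+r+3*c+2*d+e ≤ N → Inv p q r c d e →
    ∀ Q, RightMove 3 (pos p q r c d e) Q → LeftWinsFirst 3 Q := by
  intro N
  induction N using Nat.strong_induction_on with
  | _ N IH =>
    intro p q r c d e hmu hInv Q hmove
    obtain ⟨hR, hcase⟩ := rightMove_pos hmove
    have step : ∀ p' q' r' : ℕ,
        3*p'+2*q'+r'+3*c+2*d+e + 1 ≤ 3*p+2*q+r+3*c+2*d+e →
        Ready p' q' r' c d e →
        LeftWinsFirst 3 (pos p' q' r' c d e) := by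
      intro p' q' r' hm hrdy
      obtain ⟨g1, g2, g3, g4, _, g6, g7, g8, g9, g10⟩ := hrdy
      rcases Nat.eq_zero_or_pos r' with hr' | hr'
      · rcases Nat.eq_zero_or_pos q' with hq' | hq'
        · rcases Nat.eq_zero_or_pos e with he | he
          · rcases Nat.eq_zero_or_pos c with hc | hc
            · obtain ⟨hp', hd, hI⟩ := g10 hr' hq' he hc
              exact LeftWinsFirst.intro _ _ (mv12 hp' hd)
                (IH (N - 1) (by omega) p' q' r' c (d-1) (e+1) (by omega) hI)
            · obtain ⟨hp', hI⟩ := g9 hr' hq' he hc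
              exact LeftWinsFirst.intro _ _ (mv11 hp' hc)
                (IH (N - 1) (by omega) p' q' r' (c-1) (d+1) e (by omega) hI)
          · obtain ⟨hp', hI⟩ := g8 hr' hq' he
            exact LeftWinsFirst.intro _ _ (mv13 hp' he)
              (IH (N - 1) (by omega) p' q' r' c d (e-1) (by omega) hI)
        · rcases Nat.eq_zero_or_pos e with he | he
          · rcases Nat.eq_zero_or_pos d with hd | hd
            · obtain ⟨hc, hI⟩ := g7 hr' hq' he hd
              exact LeftWinsFirst.intro _ _ (mv21 hq' hc)
                (IH (N - 1) (by omega) p' q' r' (c-1) d (e+1) (by omega) hI)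
            · exact LeftWinsFirst.intro _ _ (mv22 hq' hd)
                (IH (N - 1) (by omega) p' q' r' c (d-1) e (by omega) (g6 hr' hq' he hd))
          · exact LeftWinsFirst.intro _ _ (mv23 hq' he)
              (IH (N - 1) (by omega) p' q' r' c d (e-1) (by omega) (g4 hr' hq' he))
      · rcases Nat.eq_zero_or_pos e with he | he
        · rcases Nat.eq_zero_or_pos d with hd | hd
          · obtain ⟨hc, hI⟩ := g3 hr' he hd
            exact LeftWinsFirst.intro _ _ (mv31 hr' hc)
              (IH (N - 1) (by omega) p' q' r' (c-1) d e (by omega) hI)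
          · exact LeftWinsFirst.intro _ _ (mv32 hr' hd)
              (IH (N - 1) (by omega) p' q' r' c (d-1) e (by omega) (g2 hr' he hd))
        · exact LeftWinsFirst.intro _ _ (mv33 hr' he)
            (IH (N - 1) (by omega) p' q' r' c d (e-1) (by omega) (g1 hr' he))
    clear hmove
    rcases hcase with ⟨h1, h2, rfl⟩ | ⟨h1, h2, rfl⟩ | ⟨h1, h2, rfl⟩ | ⟨h1, h2, rfl⟩ |
      ⟨h1, h2, rfl⟩ | ⟨h1, h2, rfl⟩ | ⟨h1, rfl⟩ <;>
    · refine step _ _ _ (by omega) ?_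
      refine ⟨?_, ?_, ?_, ?_, fun _ _ _ => trivial, ?_, ?_, ?_, ?_, ?_⟩ <;>
      · intros
        simp only [Inv] at hInv ⊢
        rcases hInv with h | ⟨hd0, he0, h | h | h | h | h⟩ | h | h <;> omega

lemma swapMove_LR {n : ℕ} {P Q : Pos} (h : LeftMove n P Q) :
    RightMove n (P.2, P.1) (Q.2, Q.1) := by
  obtain ⟨x, hx, y, hy, h1, h2⟩ := h
  exact ⟨y, hy, x, hx, h1, by rw [h2, Nat.add_comm]⟩

lemma sym {n : ℕ} {P : Pos} (h : LeftWinsFirst n P) : RightWinsFirst n (P.2, P.1) := by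
  induction h with
  | intro P Q hmove hwin IH =>
    refine RightWinsFirst.intro _ (Q.2, Q.1) (swapMove_LR hmove) ?_
    intro R hR
    exact IH (R.2, R.1) (swapMove_LR hR)


/-- `[1^a | 1^a]` with finger count 3 is an N-position. -/
theorem fingerThree_initial (a : ℕ) (ha : 0 < a) :
    NPos 3 (Multiset.replicate a 1, Multiset.replicate a 1) := by
  have hpos : (Multiset.replicate a 1, Multiset.replicate a 1) = pos a 0 0 a 0 0 := by
    simp [pos, M]
  have hInv : Inv a 0 0 (a - 1) 1 0 := by
    exact Or.inr (Or.inr (Or.inl ⟨rfl, rfl, rfl, rfl, by omega⟩))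
  have hL : LeftWinsFirst 3 (pos a 0 0 a 0 0) :=
    LeftWinsFirst.intro _ (pos a 0 0 (a - 1) 1 0) (mv11 ha ha)
      (main_s8 (3 * a + 2 * 0 + 0 + 3 * (a - 1) + 2 * 1 + 0) a 0 0 (a - 1) 1 0 le_rfl hInv)
  rw [hpos]
  exact ⟨hL, sym hL⟩


end Octopus
end

section
/- Let a be an odd positive integer. The Octopus position [1^a | 1^a] with finger count 2 is a P-position: whichever player moves second has a winning strategy. -/
namespace Octopus

/-! ### Auxiliary development for STATEMENT 9 -/

/-- The invariant set: positions `[1^a,2^b | 1^c,2^d]` (finger count 2) from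
which Left, moving second, wins. -/
def Sinv (a b c d : ℕ) : Prop :=
  (a = 0 ∧ b = 0)
  ∨ (b = 0 ∧ c + 1 ≤ 2 * ((a + 1 - d) / 2))
  ∨ (1 ≤ b ∧ d = 0 ∧ c + 1 ≤ 2 * (a / 2) + b)
  ∨ (1 ≤ b ∧ 1 ≤ d ∧ c + d + 1 ≤ a + b)

/-- Left has a reply from `[1^A,2^B | 1^c,2^d]` landing back in `Sinv`. -/
def Reply (A B c d : ℕ) : Prop :=
  (1 ≤ A ∧ 1 ≤ c ∧ Sinv A B (c - 1) (d + 1)) ∨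
  (1 ≤ A ∧ 1 ≤ d ∧ Sinv A B c (d - 1)) ∨
  (1 ≤ B ∧ 1 ≤ c ∧ Sinv A B (c - 1) d) ∨
  (1 ≤ B ∧ 1 ≤ d ∧ Sinv A B c (d - 1))

lemma closure1 {a b c d : ℕ} (h : Sinv a b c d) (ha : 1 ≤ a) (hc : 1 ≤ c) :
    Reply (a - 1) (b + 1) c d := by
  unfold Sinv at h
  rcases h with ⟨h1, h2⟩ | ⟨h1, h2⟩ | ⟨h1, h2, h3⟩ | ⟨h1, h2, h3⟩
  · exact absurd h1 (by omega)
  · refine Or.inr (Or.inr (Or.inl ⟨by omega, hc, ?_⟩))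
    unfold Sinv
    rcases Nat.eq_zero_or_pos d with hd | hd
    · exact Or.inr (Or.inr (Or.inl (by omega)))
    · exact Or.inr (Or.inr (Or.inr (by omega)))
  · refine Or.inr (Or.inr (Or.inl ⟨by omega, hc, ?_⟩))
    exact Or.inr (Or.inr (Or.inl (by omega)))
  · refine Or.inr (Or.inr (Or.inl ⟨by omega, hc, ?_⟩))
    exact Or.inr (Or.inr (Or.inr (by omega)))

lemma closure2 {a b c d : ℕ} (h : Sinv a b c d) (hb : 1 ≤ b) (hcd : 1 ≤ c + d) :
    Reply a (b - 1) c d := by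
  unfold Sinv at h
  rcases h with ⟨h1, h2⟩ | ⟨h1, h2⟩ | ⟨h1, h2, h3⟩ | ⟨h1, h2, h3⟩
  · exact absurd h2 (by omega)
  · exact absurd h1 (by omega)
  · by_cases hb2 : 2 ≤ b
    · refine Or.inr (Or.inr (Or.inl ⟨by omega, by omega, ?_⟩))
      exact Or.inr (Or.inr (Or.inl (by omega)))
    · refine Or.inl ⟨by omega, by omega, ?_⟩
      exact Or.inr (Or.inl (by omega))
  · by_cases hb2 : 2 ≤ b
    · rcases Nat.eq_zero_or_pos c with hc | hc
      · refine Or.inr (Or.inr (Or.inr ⟨by omega, h2, ?_⟩))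
        rcases Nat.lt_or_ge d 2 with hd2 | hd2
        · exact Or.inr (Or.inr (Or.inl (by omega)))
        · exact Or.inr (Or.inr (Or.inr (by omega)))
      · refine Or.inr (Or.inr (Or.inl ⟨by omega, hc, ?_⟩))
        exact Or.inr (Or.inr (Or.inr (by omega)))
    · refine Or.inr (Or.inl ⟨by omega, h2, ?_⟩)
      exact Or.inr (Or.inl (by omega))

lemma closure3 {a b c d : ℕ} (h : Sinv a b c d) (ha : 1 ≤ a) (hd : 1 ≤ d) :
    Reply (a - 1) b c d := by
  unfold Sinv at h
  rcases h with ⟨h1, h2⟩ | ⟨h1, h2⟩ | ⟨h1, h2, h3⟩ | ⟨h1, h2, h3⟩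
  · exact absurd h1 (by omega)
  · refine Or.inr (Or.inl ⟨by omega, hd, ?_⟩)
    exact Or.inr (Or.inl (by omega))
  · exact absurd h2 (by omega)
  · rcases Nat.eq_zero_or_pos c with hc | hc
    · refine Or.inr (Or.inr (Or.inr ⟨h1, hd, ?_⟩))
      rcases Nat.lt_or_ge d 2 with hd2 | hd2
      · exact Or.inr (Or.inr (Or.inl (by omega)))
      · exact Or.inr (Or.inr (Or.inr (by omega)))
    · refine Or.inr (Or.inr (Or.inl ⟨h1, hc, ?_⟩))
      exact Or.inr (Or.inr (Or.inr (by omega)))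

lemma mem_rep {a b z : ℕ} :
    z ∈ Multiset.replicate a 1 + Multiset.replicate b 2 ↔
      (1 ≤ a ∧ z = 1) ∨ (1 ≤ b ∧ z = 2) := by
  simp only [Multiset.mem_add, Multiset.mem_replicate]
  constructor
  · rintro (⟨h1, h2⟩ | ⟨h1, h2⟩) <;> [left; right] <;> exact ⟨by omega, h2⟩
  · rintro (⟨h1, h2⟩ | ⟨h1, h2⟩) <;> [left; right] <;> exact ⟨by omega, h2⟩

lemma erase_one {a : ℕ} (b : ℕ) (ha : 1 ≤ a) :
    (Multiset.replicate a 1 + Multiset.replicate b 2).erase 1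
      = Multiset.replicate (a - 1) 1 + Multiset.replicate b 2 := by
  obtain ⟨a', rfl⟩ : ∃ a', a = a' + 1 := ⟨a - 1, by omega⟩
  rw [Multiset.erase_add_left_pos _ (by simp [Multiset.mem_replicate]),
    Multiset.replicate_succ, Multiset.erase_cons_head]
  simp

lemma erase_two {b : ℕ} (a : ℕ) (hb : 1 ≤ b) :
    (Multiset.replicate a 1 + Multiset.replicate b 2).erase 2
      = Multiset.replicate a 1 + Multiset.replicate (b - 1) 2 := by
  obtain ⟨b', rfl⟩ : ∃ b', b = b' + 1 := ⟨b - 1, by omega⟩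
  rw [Multiset.erase_add_right_pos _ (by simp [Multiset.mem_replicate]),
    Multiset.replicate_succ, Multiset.erase_cons_head]
  simp

lemma cons_two (a b : ℕ) :
    (2 : ℕ) ::ₘ (Multiset.replicate a 1 + Multiset.replicate b 2)
      = Multiset.replicate a 1 + Multiset.replicate (b + 1) 2 := by
  rw [Multiset.replicate_succ, ← Multiset.singleton_add, ← Multiset.singleton_add]
  exact add_left_comm _ _ _

lemma rightMove_inv {a b c d : ℕ} {Q : Pos} (h : RightMove 2 (two a b c d) Q) :
    (1 ≤ a ∧ 1 ≤ c ∧ Q = two (a - 1) (b + 1) c d) ∨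
    (1 ≤ b ∧ 1 ≤ c + d ∧ Q = two a (b - 1) c d) ∨
    (1 ≤ a ∧ 1 ≤ d ∧ Q = two (a - 1) b c d) := by
  obtain ⟨x, hx, y, hy, h2, h1⟩ := h
  simp only [two] at hx hy h1 h2
  obtain ⟨Q1, Q2⟩ := Q
  simp only at h1 h2
  rcases mem_rep.1 hx with ⟨ha, rfl⟩ | ⟨hb, rfl⟩ <;>
    rcases mem_rep.1 hy with ⟨hc, rfl⟩ | ⟨hd, rfl⟩
  · left
    rw [if_pos (by norm_num), erase_one b ha, show (1 : ℕ) + 1 = 2 from rfl,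
      cons_two] at h1
    exact ⟨ha, hc, by simp [two, h1, h2]⟩
  · right; right
    rw [if_neg (by norm_num), erase_one b ha] at h1
    exact ⟨ha, hd, by simp [two, h1, h2]⟩
  · right; left
    rw [if_neg (by norm_num), erase_two a hb] at h1
    exact ⟨hb, by omega, by simp [two, h1, h2]⟩
  · right; left
    rw [if_neg (by norm_num), erase_two a hb] at h1
    exact ⟨hb, by omega, by simp [two, h1, h2]⟩

lemma leftMove_pump {A B c d : ℕ} (hA : 1 ≤ A) (hc : 1 ≤ c) :
    LeftMove 2 (two A B c d) (two A B (c - 1) (d + 1)) := by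
  refine ⟨1, mem_rep.2 (Or.inl ⟨hA, rfl⟩), 1, mem_rep.2 (Or.inl ⟨hc, rfl⟩), rfl, ?_⟩
  simp only [two]
  rw [if_pos (by norm_num : (1 : ℕ) + 1 ≤ 2), show (1 : ℕ) + 1 = 2 from rfl,
    erase_one d hc, cons_two]
lemma leftMove_k12 {A B c d : ℕ} (hA : 1 ≤ A) (hd : 1 ≤ d) :
    LeftMove 2 (two A B c d) (two A B c (d - 1)) := by
  refine ⟨1, mem_rep.2 (Or.inl ⟨hA, rfl⟩), 2, mem_rep.2 (Or.inr ⟨hd, rfl⟩), rfl, ?_⟩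
  simp only [two]
  rw [if_neg (by norm_num : ¬ ((1 : ℕ) + 2 ≤ 2)), erase_two c hd]
lemma leftMove_k21 {A B c d : ℕ} (hB : 1 ≤ B) (hc : 1 ≤ c) :
    LeftMove 2 (two A B c d) (two A B (c - 1) d) := by
  refine ⟨2, mem_rep.2 (Or.inr ⟨hB, rfl⟩), 1, mem_rep.2 (Or.inl ⟨hc, rfl⟩), rfl, ?_⟩
  simp only [two]
  rw [if_neg (by norm_num : ¬ ((2 : ℕ) + 1 ≤ 2)), erase_one d hc]
lemma leftMove_k22 {A B c d : ℕ} (hB : 1 ≤ B) (hd : 1 ≤ d) :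
    LeftMove 2 (two A B c d) (two A B c (d - 1)) := by
  refine ⟨2, mem_rep.2 (Or.inr ⟨hB, rfl⟩), 2, mem_rep.2 (Or.inr ⟨hd, rfl⟩), rfl, ?_⟩
  simp only [two]
  rw [if_neg (by norm_num : ¬ ((2 : ℕ) + 2 ≤ 2)), erase_two c hd]
lemma reply_step {A B c d n : ℕ}
    (ih : ∀ a b c d, 2 * a + b + 2 * c + d ≤ n → Sinv a b c d →
      LeftWinsSecond 2 (two a b c d))
    (hm : 2 * A + B + 2 * c + d ≤ n + 1) (hr : Reply A B c d) :
    LeftWinsFirst 2 (two A B c d) := by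
  rcases hr with ⟨hA, hc, hS⟩ | ⟨hA, hd, hS⟩ | ⟨hB, hc, hS⟩ | ⟨hB, hd, hS⟩
  · exact .intro _ _ (leftMove_pump hA hc) (ih A B (c - 1) (d + 1) (by omega) hS)
  · exact .intro _ _ (leftMove_k12 hA hd) (ih A B c (d - 1) (by omega) hS)
  · exact .intro _ _ (leftMove_k21 hB hc) (ih A B (c - 1) d (by omega) hS)
  · exact .intro _ _ (leftMove_k22 hB hd) (ih A B c (d - 1) (by omega) hS)

lemma main_induction : ∀ N a b c d, 2 * a + b + 2 * c + d ≤ N → Sinv a b c d →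
    LeftWinsSecond 2 (two a b c d) := by
  intro N
  induction N with
  | zero =>
    intro a b c d hm hS Q hQ
    rcases rightMove_inv hQ with ⟨h1, h2, _⟩ | ⟨h1, h2, _⟩ | ⟨h1, h2, _⟩ <;> omega
  | succ n ih =>
    intro a b c d hm hS Q hQ
    rcases rightMove_inv hQ with ⟨h1, h2, rfl⟩ | ⟨h1, h2, rfl⟩ | ⟨h1, h2, rfl⟩
    · exact reply_step ih (by omega) (closure1 hS h1 h2)
    · exact reply_step ih (by omega) (closure2 hS h1 h2)
    · exact reply_step ih (by omega) (closure3 hS h1 h2)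

lemma leftMove_swap {n : ℕ} {P Q : Pos} (h : LeftMove n P Q) :
    RightMove n P.swap Q.swap := by
  obtain ⟨x, hx, y, hy, h1, h2⟩ := h
  exact ⟨y, hy, x, hx, h1, by rw [Nat.add_comm y x]; exact h2⟩

lemma lwf_swap {n : ℕ} {P : Pos} (h : LeftWinsFirst n P) : RightWinsFirst n P.swap := by
  induction h with
  | intro P Q hm hw ih =>
    refine .intro _ Q.swap (leftMove_swap hm) (fun R hR => ?_)
    have h2 := leftMove_swap hR
    rw [Prod.swap_swap] at h2
    have h3 := ih R.swap h2
    rwa [Prod.swap_swap] at h3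

/-- for odd `a`, `[1^a | 1^a]` with finger count 2 is a P-position. -/
theorem fingerTwo_initial_odd (a : ℕ) (ha : 0 < a) (hodd : Odd a) :
    PPos 2 (Multiset.replicate a 1, Multiset.replicate a 1) := by
  have htwo : ((Multiset.replicate a 1, Multiset.replicate a 1) : Pos) = two a 0 a 0 := by
    simp [two]
  have hS : Sinv a 0 a 0 := by
    obtain ⟨k, rfl⟩ := hodd
    unfold Sinv; omega
  have hL : LeftWinsSecond 2 (two a 0 a 0) := main_induction _ a 0 a 0 le_rfl hS
  constructor
  · rw [htwo]; exact hL
  · rw [htwo]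
    intro Q hQ
    have h2 := leftMove_swap hQ
    have hswap : (two a 0 a 0).swap = two a 0 a 0 := rfl
    rw [hswap] at h2
    have h3 := lwf_swap (hL Q.swap h2)
    rwa [Prod.swap_swap] at h3

end Octopus
end
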